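/- Let T ⊂ ℝ^d be a bounded set, let Δ = diam(T), and for ε > 0 define the global packing entropy h_T(ε) = log M(T, εB₂) and the local packing entropy h_T^loc(ε) = sup_{δ ≥ ε} sup_{x ∈ T} log M(T ∩ (x + 2δB₂), δB₂). Then for every integer k ≥ 1, h_T^loc(Δ2^{-k}) ≤ h_T(Δ2^{-k}) ≤ Σ_{j=1}^{k} h_T^loc(Δ2^{-j}). -/

import Mathlib

/-!
Splitting a maximal `δ`-packing of `T` along a minimal `2δ`-cover gives
`M(T, δ) ≤ N(T, 2δ) · M(T ∩ (θ + 2δB₂), δ) ≤ M(T, 2δ) · M(T ∩ (θ + 2δB₂), δ)` for some `θ ∈ T`,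
that is `h_T(δ) ≤ h_T(2δ) + h_T^loc(δ)`. Iterating from `δ = Δ2^{-k}` up to `Δ`, where
`M(T, Δ) ≤ 1`, gives the upper bound; the lower bound is monotonicity of packing numbers.
All packing numbers involved are finite because bounded sets of `ℝ^d` are totally bounded,
so `packNum` agrees with Mathlib's `Metric.packingNumber`.
-/

open MeasureTheory Metric Set
open scoped ENNReal NNReal

noncomputable section

/-- `packNum A B` is the `B`-packing number of `A`: the largest cardinality of a finite
subset `A₀ ⊆ A` such that `x − y ∉ B` for all distinct `x, y ∈ A₀`. -/
def packNum {E : Type*} [Sub E] (A B : Set E) : ℕ :=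
  sSup {n : ℕ | ∃ s : Finset E, ↑s ⊆ A ∧
    (∀ x ∈ s, ∀ y ∈ s, x ≠ y → x - y ∉ B) ∧ s.card = n}

/-- Global packing entropy `h_T(ε) = log M(T, εB₂)`. -/
def entGlob {d : ℕ} (T : Set (EuclideanSpace ℝ (Fin d))) (ε : ℝ) : ℝ :=
  Real.log (packNum T (closedBall 0 ε))

/-- Local packing entropy
`h_T^loc(ε) = sup_{δ ≥ ε} sup_{x ∈ T} log M(T ∩ (x + 2δB₂), δB₂)`. -/
def entLoc {d : ℕ} (T : Set (EuclideanSpace ℝ (Fin d))) (ε : ℝ) : ℝ :=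
  ⨆ δ : {δ : ℝ // ε ≤ δ}, ⨆ x : T,
    Real.log (packNum (T ∩ closedBall (x : EuclideanSpace ℝ (Fin d)) (2 * δ.1))
      (closedBall 0 δ.1))

namespace Metric

section PseudoEMetric

variable {X : Type*} [PseudoEMetricSpace X] {A B : Set X} {ε δ : ℝ≥0}

lemma packingNumber_mono (hAB : A ⊆ B) (hεδ : ε ≤ δ) :
    packingNumber δ A ≤ packingNumber ε B := by
  simp only [packingNumber, iSup_le_iff]
  exact fun C hCA hC ↦
    (hC.anti (ENNReal.coe_le_coe.2 hεδ)).encard_le_packingNumber (hCA.trans hAB)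

lemma packingNumber_le_one_of_ediam_le (hA : ediam A ≤ ε) : packingNumber ε A ≤ 1 := by
  simp only [packingNumber, iSup_le_iff, encard_le_one_iff]
  intro C hCA hC a b ha hb
  by_contra hab
  exact (hC ha hb hab).not_ge ((edist_le_ediam_of_mem (hCA ha) (hCA hb)).trans hA)

lemma packingNumber_ne_top_of_isCompact_closure (hε : ε ≠ 0) (hA : IsCompact (closure A)) :
    packingNumber ε A ≠ ⊤ := by
  obtain ⟨N, -, hNfin, hN⟩ := exists_finite_isCover_of_isCompact_closure (ε := ε / 2)
    (by simpa using hε) hA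
  refine ne_top_of_le_ne_top hNfin.encard_lt_top.ne ?_
  calc packingNumber ε A = packingNumber (2 * (ε / 2)) A := by rw [mul_div_cancel₀ _ two_ne_zero]
    _ ≤ externalCoveringNumber (ε / 2) A := packingNumber_two_mul_le_externalCoveringNumber _ _
    _ ≤ N.encard := hN.externalCoveringNumber_le_encard

lemma exists_packingNumber_le_coveringNumber_mul (hA : A.Nonempty)
    (hcov : coveringNumber ε A ≠ ⊤) :
    ∃ x ∈ A, packingNumber δ A ≤ coveringNumber ε A * packingNumber δ (A ∩ closedEBall x ε) := by
  obtain ⟨C, hCA, hCfin, hCcov, hCcard⟩ := exists_set_encard_eq_coveringNumber hcov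
  obtain ⟨x, hxC, hxmax⟩ := exists_max_image C (fun c ↦ packingNumber δ (A ∩ closedEBall c ε))
    hCfin (hCcov.nonempty hA)
  refine ⟨x, hCA hxC, ?_⟩
  simp only [packingNumber, iSup_le_iff, ← hCcard]
  intro D hDA hD
  have hDcov : D ⊆ ⋃ c ∈ hCfin.toFinset, D ∩ closedEBall c ε := by
    intro y hy
    obtain ⟨c, hc, hyc⟩ := mem_iUnion₂.1 (isCover_iff_subset_iUnion_closedEBall.1 hCcov (hDA hy))
    exact mem_biUnion (hCfin.mem_toFinset.2 hc) ⟨hy, hyc⟩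
  calc D.encard ≤ ∑ c ∈ hCfin.toFinset, (D ∩ closedEBall c ε).encard :=
        (encard_le_encard hDcov).trans (Finset.set_encard_biUnion_le _ _)
    _ ≤ ∑ c ∈ hCfin.toFinset, packingNumber δ (A ∩ closedEBall x ε) := by
        refine Finset.sum_le_sum fun c hc ↦ le_trans ?_ (hxmax c (hCfin.mem_toFinset.1 hc))
        exact (hD.subset inter_subset_left).encard_le_packingNumber
          (inter_subset_inter_left _ hDA)
    _ = C.encard * packingNumber δ (A ∩ closedEBall x ε) := by
        rw [Finset.sum_const, nsmul_eq_mul, hCfin.encard_eq_coe_toFinset_card]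

end PseudoEMetric

lemma _root_.Bornology.IsBounded.ediam_le_toNNReal_diam {X : Type*} [PseudoMetricSpace X]
    {A : Set X} (hA : Bornology.IsBounded A) : ediam A ≤ (diam A).toNNReal :=
  ediam_le_of_forall_dist_le fun _ hx _ hy ↦ dist_le_diam_of_mem hA hx hy

end Metric

lemma Real.log_natCast_le_log_natCast {m n : ℕ} (h : m ≤ n) : Real.log m ≤ Real.log n := by
  rcases m.eq_zero_or_pos with rfl | hm
  · simpa using Real.log_natCast_nonneg n
  · exact Real.log_le_log (by exact_mod_cast hm) (by exact_mod_cast h)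

section packNum

variable {E : Type*} [SeminormedAddCommGroup E] {A B : Set E} {ε δ : ℝ≥0}

lemma sub_notMem_closedBall_zero_iff {x y : E} :
    x - y ∉ closedBall (0 : E) ε ↔ (ε : ℝ≥0∞) < edist x y := by
  rw [mem_closedBall_zero_iff, ← dist_eq_norm, not_le, edist_dist, ← ENNReal.ofReal_coe_nnreal]
  exact (ENNReal.ofReal_lt_ofReal_iff_of_nonneg ε.2).symm

lemma natCast_packNum_closedBall (h : packingNumber ε A ≠ ⊤) :
    (packNum A (closedBall 0 ε) : ℕ∞) = packingNumber ε A := by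
  have hsep : ∀ s : Finset E, (∀ x ∈ s, ∀ y ∈ s, x ≠ y → x - y ∉ closedBall 0 ε) ↔
      IsSeparated ε (s : Set E) := by
    simp only [IsSeparated, Set.Pairwise, Finset.mem_coe, sub_notMem_closedBall_zero_iff,
      implies_true]
  have hgreatest : IsGreatest {n : ℕ | ∃ s : Finset E, ↑s ⊆ A ∧
      (∀ x ∈ s, ∀ y ∈ s, x ≠ y → x - y ∉ closedBall 0 ε) ∧ s.card = n}
      (packingNumber ε A).toNat := by
    constructor
    · obtain ⟨C, hCA, hCfin, hC, hCcard⟩ := exists_set_encard_eq_packingNumber h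
      refine ⟨hCfin.toFinset, by simpa, (hsep _).2 (by simpa), ?_⟩
      rw [← hCcard, hCfin.encard_eq_coe_toFinset_card, ENat.toNat_natCast]
    · rintro n ⟨s, hsA, hs, rfl⟩
      rw [← ENat.toNat_natCast s.card, ← encard_coe_eq_coe_finsetCard]
      exact ENat.toNat_le_toNat (((hsep s).1 hs).encard_le_packingNumber hsA) h
  rw [packNum, hgreatest.csSup_eq, ENat.natCast_toNat h]

lemma packNum_closedBall_le_packNum_closedBall (hAB : A ⊆ B) (hεδ : ε ≤ δ)
    (h : packingNumber ε B ≠ ⊤) :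
    packNum A (closedBall 0 δ) ≤ packNum B (closedBall 0 ε) := by
  have hmono := packingNumber_mono hAB hεδ
  rw [← ENat.natCast_le_natCast, natCast_packNum_closedBall (ne_top_of_le_ne_top h hmono),
    natCast_packNum_closedBall h]
  exact hmono

lemma packNum_closedBall_le_one (hA : ediam A ≤ ε) : packNum A (closedBall 0 ε) ≤ 1 := by
  have hle := packingNumber_le_one_of_ediam_le hA
  rwa [← ENat.natCast_le_natCast,
    natCast_packNum_closedBall (ne_top_of_le_ne_top ENat.one_ne_top hle)]

lemma one_le_packNum_closedBall (hA : A.Nonempty) (h : packingNumber ε A ≠ ⊤) :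
    1 ≤ packNum A (closedBall 0 ε) := by
  rw [← ENat.natCast_le_natCast, natCast_packNum_closedBall h, Nat.cast_one, Order.one_le_iff_pos]
  exact packingNumber_pos_iff.2 hA

/-- The factor `N(A, 2ε)` is bounded by `M(A, 2ε)` via `coveringNumber_le_packingNumber`. -/
lemma exists_packNum_closedBall_le_mul (hA : A.Nonempty) (h : packingNumber ε A ≠ ⊤) :
    ∃ x ∈ A, packNum A (closedBall 0 ε) ≤
      packNum A (closedBall 0 (2 * ε)) * packNum (A ∩ closedBall x (2 * ε)) (closedBall 0 ε) := by
  have h2 : packingNumber (2 * ε) A ≠ ⊤ :=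
    ne_top_of_le_ne_top h (packingNumber_mono subset_rfl (le_mul_of_one_le_left ε.2 one_le_two))
  obtain ⟨x, hx, hle⟩ := exists_packingNumber_le_coveringNumber_mul (δ := ε) hA
    (ne_top_of_le_ne_top h2 (coveringNumber_le_packingNumber _ _))
  have hloc : packingNumber ε (A ∩ closedEBall x ↑(2 * ε)) ≠ ⊤ :=
    ne_top_of_le_ne_top h (packingNumber_mono inter_subset_left le_rfl)
  have := hle.trans (mul_le_mul_left (coveringNumber_le_packingNumber _ _) _)
  rw [← natCast_packNum_closedBall h, ← natCast_packNum_closedBall h2,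
    ← natCast_packNum_closedBall hloc, closedEBall_coe] at this
  refine ⟨x, hx, ?_⟩
  exact_mod_cast this

end packNum

section entropy

variable {d : ℕ} {T : Set (EuclideanSpace ℝ (Fin d))} {ε : ℝ≥0}

lemma entGlob_nonneg (ε : ℝ) : 0 ≤ entGlob T ε := Real.log_natCast_nonneg _

lemma entLoc_nonneg (ε : ℝ) : 0 ≤ entLoc T ε :=
  Real.iSup_nonneg fun _ ↦ Real.iSup_nonneg fun _ ↦ Real.log_natCast_nonneg _

lemma log_packNum_le_entGlob (h : packingNumber ε T ≠ ⊤) {δ : ℝ} (hεδ : ε ≤ δ)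
    (x : EuclideanSpace ℝ (Fin d)) :
    Real.log (packNum (T ∩ closedBall x (2 * δ)) (closedBall 0 δ)) ≤ entGlob T ε :=
  Real.log_natCast_le_log_natCast <| packNum_closedBall_le_packNum_closedBall
    (δ := ⟨δ, ε.2.trans hεδ⟩) inter_subset_left hεδ h

lemma entLoc_le_entGlob (h : packingNumber ε T ≠ ⊤) : entLoc T ε ≤ entGlob T ε :=
  Real.iSup_le (fun δ ↦ Real.iSup_le (fun x ↦ log_packNum_le_entGlob h δ.2 x)
    (entGlob_nonneg _)) (entGlob_nonneg _)

lemma log_packNum_le_entLoc (h : packingNumber ε T ≠ ⊤) (x : T) :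
    Real.log (packNum (T ∩ closedBall (x : EuclideanSpace ℝ (Fin d)) (2 * ε)) (closedBall 0 ε))
      ≤ entLoc T ε := by
  have hbdd (δ : {δ : ℝ // ε ≤ δ}) : BddAbove (range fun y : T ↦
      Real.log (packNum (T ∩ closedBall (y : EuclideanSpace ℝ (Fin d)) (2 * δ.1))
        (closedBall 0 δ.1))) := by
    refine ⟨entGlob T ε, ?_⟩
    rintro _ ⟨y, rfl⟩
    exact log_packNum_le_entGlob h δ.2 y
  have hbdd' : BddAbove (range fun δ : {δ : ℝ // ε ≤ δ} ↦ ⨆ y : T,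
      Real.log (packNum (T ∩ closedBall (y : EuclideanSpace ℝ (Fin d)) (2 * δ.1))
        (closedBall 0 δ.1))) := by
    refine ⟨entGlob T ε, ?_⟩
    rintro _ ⟨δ, rfl⟩
    exact Real.iSup_le (fun y ↦ log_packNum_le_entGlob h δ.2 y) (entGlob_nonneg _)
  rw [entLoc]
  exact le_ciSup_of_le hbdd' ⟨ε, le_rfl⟩ (le_ciSup (hbdd ⟨ε, le_rfl⟩) x)

lemma entGlob_le_entGlob_two_mul_add_entLoc (h : packingNumber ε T ≠ ⊤) :
    entGlob T ε ≤ entGlob T (2 * ε) + entLoc T ε := by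
  rcases T.eq_empty_or_nonempty with rfl | hT
  · have hempty : packNum (∅ : Set (EuclideanSpace ℝ (Fin d))) (closedBall 0 ε) = 0 := by
      exact_mod_cast (natCast_packNum_closedBall h).trans (packingNumber_empty ε)
    rw [entGlob, hempty, Nat.cast_zero, Real.log_zero]
    exact add_nonneg (entGlob_nonneg _) (entLoc_nonneg _)
  obtain ⟨x, hx, hle⟩ := exists_packNum_closedBall_le_mul hT h
  have hprod : packNum T (closedBall 0 (2 * ε)) *
      packNum (T ∩ closedBall x (2 * ε)) (closedBall 0 ε) ≠ 0 := by
    have := one_le_packNum_closedBall hT h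
    omega
  obtain ⟨hN, hM⟩ := mul_ne_zero_iff.1 hprod
  calc entGlob T ε
      ≤ Real.log (packNum T (closedBall 0 (2 * ε)) *
          packNum (T ∩ closedBall x (2 * ε)) (closedBall 0 ε) : ℕ) :=
        Real.log_natCast_le_log_natCast hle
    _ = entGlob T (2 * ε) + Real.log (packNum (T ∩ closedBall x (2 * ε)) (closedBall 0 ε)) := by
        rw [Nat.cast_mul, Real.log_mul (by exact_mod_cast hN) (by exact_mod_cast hM), entGlob]
    _ ≤ entGlob T (2 * ε) + entLoc T ε := by
        gcongr
        exact log_packNum_le_entLoc h ⟨x, hx⟩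

lemma entGlob_le_entGlob_add_sum_entLoc (Δ : ℝ≥0) (n : ℕ)
    (h : packingNumber (Δ * 2 ^ (-(n : ℤ))) T ≠ ⊤) :
    entGlob T (Δ * 2 ^ (-(n : ℤ))) ≤
      entGlob T Δ + ∑ j ∈ Finset.Icc 1 n, entLoc T (Δ * 2 ^ (-(j : ℤ))) := by
  induction n with
  | zero => simp
  | succ n ih =>
    have hscale : 2 * (Δ * 2 ^ (-((n + 1 : ℕ) : ℤ))) = Δ * 2 ^ (-(n : ℤ)) := by
      rw [mul_left_comm, ← zpow_one_add₀ two_ne_zero]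
      congr 2
      push_cast
      ring
    have hstep := entGlob_le_entGlob_two_mul_add_entLoc h
    rw [← NNReal.coe_two, ← NNReal.coe_mul, hscale] at hstep
    have ih := ih (ne_top_of_le_ne_top h (packingNumber_mono subset_rfl
      (hscale ▸ le_mul_of_one_le_left zero_le one_le_two)))
    rw [Finset.sum_Icc_succ_top (by omega)]
    push_cast at hstep ih ⊢
    linarith

end entropy

theorem statement8 {d : ℕ} (T : Set (EuclideanSpace ℝ (Fin d)))
    (hbd : Bornology.IsBounded T) (k : ℕ) :
    entLoc T (diam T * 2 ^ (-(k : ℤ))) ≤ entGlob T (diam T * 2 ^ (-(k : ℤ))) ∧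
    entGlob T (diam T * 2 ^ (-(k : ℤ))) ≤
      ∑ j ∈ Finset.Icc 1 k, entLoc T (diam T * 2 ^ (-(j : ℤ))) := by
  set Δ := (diam T).toNNReal
  have hdiam : (Δ : ℝ) = diam T := Real.coe_toNNReal _ diam_nonneg
  have hfin : packingNumber (Δ * 2 ^ (-(k : ℤ))) T ≠ ⊤ := by
    rcases eq_or_ne Δ 0 with hΔ | hΔ
    · rw [hΔ, zero_mul, ← hΔ]
      exact ne_top_of_le_ne_top ENat.one_ne_top
        (packingNumber_le_one_of_ediam_le hbd.ediam_le_toNNReal_diam)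
    · exact packingNumber_ne_top_of_isCompact_closure (by positivity) hbd.isCompact_closure
  have hglob : entGlob T Δ ≤ 0 :=
    (Real.log_natCast_le_log_natCast
      (packNum_closedBall_le_one hbd.ediam_le_toNNReal_diam)).trans_eq (by simp)
  have hloc := entLoc_le_entGlob hfin
  have hsum := entGlob_le_entGlob_add_sum_entLoc Δ k hfin
  push_cast [hdiam] at hloc hsum hglob
  exact ⟨hloc, by linarith⟩
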